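/- arXiv:1904.07272 — 7 statements merged into one kernel-verified Lean document; each statement's English description precedes it below -/
import Mathlib

section
/- Pinsker's inequality (finite form): Let Ω be a finite set and let p, q be probability mass functions on Ω with q(x) > 0 for all x ∈ Ω. Then for every event A ⊆ Ω, 2·(p(A) − q(A))² ≤ KL(p, q). -/
/-!
With `klFun t = t log t + 1 - t`, the divergence is `∑ q · klFun (p / q)`. The elementary bound
`klFun t ≥ 3 (t - 1)² / (2 (t + 2))` bounds each term below by `3 (p - q)² / (2 (p + 2q))`, and
Cauchy–Schwarz against the weights `2 (p + 2q) / 3`, whose total is `2`, gives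
`(∑ |p - q|)² ≤ 2 KL(p, q)`. Finally `2 |p(A) - q(A)| ≤ ∑ |p - q|` because `p - q` sums to zero.
-/

open Real Set InformationTheory Finset

lemma isMinOn_of_sub_mul_deriv_nonneg {f f' : ℝ → ℝ} {s : Set ℝ} {a : ℝ} (hs : Convex ℝ s)
    (ha : a ∈ s) (hf : ContinuousOn f s) (hf' : ∀ x ∈ interior s, HasDerivAt f (f' x) x)
    (hsign : ∀ x ∈ interior s, 0 ≤ (x - a) * f' x) : IsMinOn f s a := by
  intro t ht
  rcases le_total a t with hat | hta
  · have hsub : Icc a t ⊆ s := hs.ordConnected.out ha ht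
    refine monotoneOn_of_hasDerivWithinAt_nonneg (convex_Icc a t) (hf.mono hsub)
      (fun x hx ↦ (hf' x (interior_mono hsub hx)).hasDerivWithinAt) (fun x hx ↦ ?_)
      (left_mem_Icc.2 hat) (right_mem_Icc.2 hat) hat
    rw [interior_Icc] at hx
    exact nonneg_of_mul_nonneg_right (hsign x (interior_mono hsub (by rwa [interior_Icc])))
      (sub_pos.2 hx.1)
  · have hsub : Icc t a ⊆ s := hs.ordConnected.out ht ha
    refine antitoneOn_of_hasDerivWithinAt_nonpos (convex_Icc t a) (hf.mono hsub)
      (fun x hx ↦ (hf' x (interior_mono hsub hx)).hasDerivWithinAt) (fun x hx ↦ ?_)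
      (left_mem_Icc.2 hta) (right_mem_Icc.2 hta) hta
    rw [interior_Icc] at hx
    exact nonpos_of_mul_nonneg_right (hsign x (interior_mono hsub (by rwa [interior_Icc])))
      (sub_neg.2 hx.2)

lemma two_mul_sub_one_div_add_one_le_log {t : ℝ} (ht : 1 ≤ t) :
    2 * (t - 1) / (t + 1) ≤ log t := by
  have h := le_log_one_add_of_nonneg (sub_nonneg.2 ht)
  rwa [add_sub_cancel, sub_add, show (1 : ℝ) - 2 = -1 by norm_num, sub_neg_eq_add] at h

lemma log_le_two_mul_sub_one_div_add_one {t : ℝ} (h0 : 0 < t) (h1 : t ≤ 1) :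
    log t ≤ 2 * (t - 1) / (t + 1) := by
  have h := two_mul_sub_one_div_add_one_le_log (one_le_inv_iff₀.2 ⟨h0, h1⟩)
  rw [log_inv] at h
  have : 2 * (t⁻¹ - 1) / (t⁻¹ + 1) = -(2 * (t - 1) / (t + 1)) := by
    field_simp
    ring
  linarith

lemma hasDerivAt_klFun_sub_three_mul_sq_div {t : ℝ} (ht : 0 < t) :
    HasDerivAt (fun x ↦ klFun x - 3 * (x - 1) ^ 2 / (2 * (x + 2)))
      (log t - 3 * (t - 1) * (t + 5) / (2 * (t + 2) ^ 2)) t := by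
  have hq : HasDerivAt (fun x ↦ 3 * (x - 1) ^ 2 / (2 * (x + 2)))
      (3 * (t - 1) * (t + 5) / (2 * (t + 2) ^ 2)) t := by
    refine ((((hasDerivAt_id t).sub_const 1).fun_pow 2).const_mul 3 |>.div
      (((hasDerivAt_id t).add_const 2).const_mul 2) (by positivity)).congr_deriv ?_
    simp only [id_eq]
    field_simp
    ring
  exact (hasDerivAt_klFun ht.ne').sub hq

lemma three_mul_sq_div_le_klFun {t : ℝ} (ht : 0 ≤ t) :
    3 * (t - 1) ^ 2 / (2 * (t + 2)) ≤ klFun t := by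
  suffices IsMinOn (fun x ↦ klFun x - 3 * (x - 1) ^ 2 / (2 * (x + 2))) (Ici 0) 1 by
    have := this ht
    norm_num [klFun_one] at this
    linarith
  refine isMinOn_of_sub_mul_deriv_nonneg (convex_Ici 0) (by norm_num) ?_
    (fun x hx ↦ hasDerivAt_klFun_sub_three_mul_sq_div (by rwa [interior_Ici] at hx))
    (fun x hx ↦ ?_)
  · exact continuous_klFun.continuousOn.sub
      (by fun_prop (disch := intro x (hx : 0 ≤ x); positivity))
  rw [interior_Ici, Set.mem_Ioi] at hx
  -- `log x` lies on the same side of `2 (x - 1) / (x + 1)` as `x` of `1`, and the gap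
  -- between the two rational functions is `(x - 1)⁴ / (2 (x + 1) (x + 2)²)`.
  have hgap :
      0 ≤ (x - 1) * (2 * (x - 1) / (x + 1) - 3 * (x - 1) * (x + 5) / (2 * (x + 2) ^ 2)) := by
    rw [div_sub_div _ _ (by positivity) (by positivity)]
    have : 0 ≤ (x - 1) ^ 4 / ((x + 1) * (2 * (x + 2) ^ 2)) := by positivity
    convert this using 1
    ring
  rcases le_total 1 x with h1 | h1
  · nlinarith [two_mul_sub_one_div_add_one_le_log h1]
  · nlinarith [log_le_two_mul_sub_one_div_add_one hx h1]

lemma mul_klFun_div {p q : ℝ} (hq : q ≠ 0) : q * klFun (p / q) = p * log (p / q) + q - p := by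
  rw [klFun_apply, mul_sub, mul_add, ← mul_assoc, mul_div_cancel₀ _ hq]
  ring

lemma three_mul_sq_div_le_mul_klFun_div {p q : ℝ} (hp : 0 ≤ p) (hq : 0 < q) :
    3 * (p - q) ^ 2 / (2 * (p + 2 * q)) ≤ q * klFun (p / q) := by
  have h := mul_le_mul_of_nonneg_left (three_mul_sq_div_le_klFun (div_nonneg hp hq.le)) hq.le
  refine le_of_eq_of_le ?_ h
  field_simp

lemma two_mul_abs_sum_le_sum_abs_of_sum_eq_zero {ι R : Type*} [Fintype ι] [Ring R]
    [LinearOrder R] [IsOrderedRing R] {f : ι → R} (hf : ∑ i, f i = 0) (A : Finset ι) :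
    2 * |∑ i ∈ A, f i| ≤ ∑ i, |f i| := by
  classical
  have hcompl : ∑ i ∈ Aᶜ, f i = -∑ i ∈ A, f i := by
    rw [eq_neg_iff_add_eq_zero, add_comm, sum_add_sum_compl, hf]
  have hA := abs_sum_le_sum_abs f A
  have hAc := abs_sum_le_sum_abs f Aᶜ
  rw [hcompl, abs_neg] at hAc
  rw [← sum_add_sum_compl A, two_mul]
  exact add_le_add hA hAc

theorem sq_sum_abs_sub_le_two_mul_sum_mul_log {ι : Type*} [Fintype ι] (p q : ι → ℝ)
    (hp0 : ∀ x, 0 ≤ p x) (hp1 : ∑ x, p x = 1) (hq0 : ∀ x, 0 < q x) (hq1 : ∑ x, q x = 1) :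
    (∑ x, |p x - q x|) ^ 2 ≤ 2 * ∑ x, p x * log (p x / q x) := by
  set w : ι → ℝ := fun x ↦ 2 * (p x + 2 * q x) / 3
  have hw_pos : ∀ x, 0 < w x := fun x ↦ by have := hp0 x; have := hq0 x; positivity
  have hw_sum : ∑ x, w x = 2 := by
    simp only [w, ← sum_div, mul_add, sum_add_distrib, ← mul_sum, hp1, hq1]
    norm_num
  have hkl : ∑ x, p x * log (p x / q x) = ∑ x, q x * klFun (p x / q x) := by
    simp only [fun x ↦ mul_klFun_div (p := p x) (hq0 x).ne', sum_sub_distrib, sum_add_distrib,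
      hp1, hq1, add_sub_cancel_right]
  calc (∑ x, |p x - q x|) ^ 2 = 2 * ((∑ x, |p x - q x|) ^ 2 / ∑ x, w x) := by
        rw [hw_sum]; ring
    _ ≤ 2 * ∑ x, |p x - q x| ^ 2 / w x := by
        gcongr
        exact sq_sum_div_le_sum_sq_div _ _ fun x _ ↦ hw_pos x
    _ ≤ 2 * ∑ x, q x * klFun (p x / q x) := by
        gcongr with x
        refine le_of_eq_of_le ?_ (three_mul_sq_div_le_mul_klFun_div (hp0 x) (hq0 x))
        rw [sq_abs, div_div_eq_mul_div]
        ring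
    _ = 2 * ∑ x, p x * log (p x / q x) := by rw [hkl]

/-- **Pinsker's inequality (finite form).**
For probability mass functions `p, q` on a finite set `Ω` with `q x > 0` for all `x`,
and any event `A ⊆ Ω`, we have `2 * (p(A) - q(A))^2 ≤ KL(p, q)`,
where `KL(p,q) = ∑ x, p x * log (p x / q x)`. -/
theorem pinsker_finite {Ω : Type*} [Fintype Ω] (p q : Ω → ℝ)
    (hp0 : ∀ x, 0 ≤ p x) (hp1 : ∑ x, p x = 1)
    (hq0 : ∀ x, 0 < q x) (hq1 : ∑ x, q x = 1)
    (A : Finset Ω) :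
    2 * ((∑ x ∈ A, p x) - ∑ x ∈ A, q x) ^ 2 ≤ ∑ x, p x * Real.log (p x / q x) := by
  have htv := two_mul_abs_sum_le_sum_abs_of_sum_eq_zero (f := fun x ↦ p x - q x)
    (by rw [sum_sub_distrib, hp1, hq1, sub_self]) A
  have hpinsker := sq_sum_abs_sub_le_two_mul_sum_mul_log p q hp0 hp1 hq0 hq1
  rw [← sum_sub_distrib]
  calc 2 * (∑ x ∈ A, (p x - q x)) ^ 2 = (2 * |∑ x ∈ A, (p x - q x)|) ^ 2 / 2 := by
        rw [mul_pow, sq_abs]; ring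
    _ ≤ (∑ x, |p x - q x|) ^ 2 / 2 := by gcongr
    _ ≤ ∑ x, p x * log (p x / q x) := by linarith
end

section
/- Total-variation bound for products of coins: Fix n ∈ ℕ and ε ∈ (0, 1/2). Let p = RC_ε^n and q = RC_0^n be the n-fold product distributions on Ω = {0,1}^n. Then for every event A ⊆ Ω, |p(A) − q(A)| ≤ ε·√n. -/
set_option maxHeartbeats 1000000


/-- `RC ε` is the distribution on `{0,1}` (encoded as `Bool`) assigning probability
`(1+ε)/2` to `1` (i.e. `true`) and `(1-ε)/2` to `0` (i.e. `false`). -/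
noncomputable def RC (ε : ℝ) : Bool → ℝ := fun b => if b then (1 + ε) / 2 else (1 - ε) / 2

/-- **Total-variation bound for products of coins.**
Let `p = RC_ε^n` and `q = RC_0^n` be the `n`-fold product distributions on `{0,1}^n`.
Then for every event `A ⊆ {0,1}^n`, `|p(A) - q(A)| ≤ ε·√n`. -/
theorem tv_product_coins (n : ℕ) (ε : ℝ) (hε0 : 0 < ε) (hε1 : ε < 1 / 2)
    (A : Finset (Fin n → Bool)) :
    |(∑ x ∈ A, ∏ i, RC ε (x i)) - ∑ x ∈ A, ∏ i, RC 0 (x i)| ≤ ε * Real.sqrt n := by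
  have hε1' : ε < 1 := by linarith
  set p : (Fin n → Bool) → ℝ := fun x => ∏ i, RC ε (x i) with hp
  set q : (Fin n → Bool) → ℝ := fun x => ∏ i, RC 0 (x i) with hq
  have hRCε : ∀ c, 0 ≤ RC ε c := by
    intro c; cases c <;> simp [RC] <;> linarith
  have hRC0 : ∀ c, 0 ≤ RC 0 c := by
    intro c; cases c <;> norm_num [RC]
  -- square-root pointwise functions
  set a : (Fin n → Bool) → ℝ := fun x => ∏ i, Real.sqrt (RC ε (x i)) with ha
  set b : (Fin n → Bool) → ℝ := fun x => ∏ i, Real.sqrt (RC 0 (x i)) with hb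
  have ha0 : ∀ x, 0 ≤ a x := fun x =>
    Finset.prod_nonneg fun i _ => Real.sqrt_nonneg _
  have hb0 : ∀ x, 0 ≤ b x := fun x =>
    Finset.prod_nonneg fun i _ => Real.sqrt_nonneg _
  have ha2 : ∀ x, a x ^ 2 = p x := by
    intro x
    rw [ha, ← Finset.prod_pow]
    exact Finset.prod_congr rfl fun i _ => Real.sq_sqrt (hRCε _)
  have hb2 : ∀ x, b x ^ 2 = q x := by
    intro x
    rw [hb, ← Finset.prod_pow]
    exact Finset.prod_congr rfl fun i _ => Real.sq_sqrt (hRC0 _)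
  -- the Hellinger affinity per coordinate
  set u : ℝ := Real.sqrt (1 + ε) with hu
  set v : ℝ := Real.sqrt (1 - ε) with hv
  set ρ : ℝ := (u + v) / 2 with hρ
  have hu0 : 0 ≤ u := Real.sqrt_nonneg _
  have hv0 : 0 ≤ v := Real.sqrt_nonneg _
  have hu2 : u ^ 2 = 1 + ε := Real.sq_sqrt (by linarith)
  have hv2 : v ^ 2 = 1 - ε := Real.sq_sqrt (by linarith)
  have huv1 : u * v ≤ 1 := by
    nlinarith [sq_nonneg (u * v - 1), sq_nonneg (u - v), mul_nonneg hu0 hv0]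
  have huv2 : 1 - ε ^ 2 ≤ u * v := by
    nlinarith [mul_nonneg (mul_nonneg hu0 hv0) (sub_nonneg.2 huv1)]
  have hρ1 : ρ ≤ 1 := by
    rw [hρ]; nlinarith [sq_nonneg (u + v - 2)]
  have hρlb : 1 - ε ^ 2 / 2 ≤ ρ := by
    rw [hρ]
    nlinarith [huv2, hu2, hv2, hu0, hv0, sq_nonneg (u + v - (2 - ε ^ 2)),
      add_nonneg hu0 hv0, hε0.le, hε1'.le]
  have hρ0 : 0 ≤ ρ := by rw [hρ]; positivity
  have sqrt4 : Real.sqrt 4 = 2 := by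
    rw [show (4 : ℝ) = 2 ^ 2 by norm_num, Real.sqrt_sq (by norm_num)]
  -- total-mass computations
  have key1 : ∑ x : Fin n → Bool, p x = 1 := by
    rw [hp, ← Fintype.sum_pow (fun c => RC ε c) n, Fintype.sum_bool,
      show RC ε true + RC ε false = 1 by simp [RC]; ring, one_pow]
  have key2 : ∑ x : Fin n → Bool, q x = 1 := by
    rw [hq, ← Fintype.sum_pow (fun c => RC 0 c) n, Fintype.sum_bool,
      show RC 0 true + RC 0 false = 1 by norm_num [RC], one_pow]
  have key3 : ∑ x : Fin n → Bool, a x * b x = ρ ^ n := by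
    have coor : ∀ c : Bool, Real.sqrt (RC ε c) * Real.sqrt (RC 0 c)
        = (if c then u else v) / 2 := by
      intro c
      cases c
      · simp only [RC, Bool.false_eq_true, if_false]
        rw [← Real.sqrt_mul (by linarith),
          show (1 - ε) / 2 * ((1 - 0) / 2) = (1 - ε) / 4 by ring,
          Real.sqrt_div (by linarith) 4, sqrt4]
      · simp only [RC, if_true]
        rw [← Real.sqrt_mul (by linarith),
          show (1 + ε) / 2 * ((1 + 0) / 2) = (1 + ε) / 4 by ring,
          Real.sqrt_div (by linarith) 4, sqrt4]
    calc ∑ x : Fin n → Bool, a x * b x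
        = ∑ x : Fin n → Bool, ∏ i,
            (Real.sqrt (RC ε (x i)) * Real.sqrt (RC 0 (x i))) := by
          refine Finset.sum_congr rfl fun x _ => ?_
          rw [ha, hb, Finset.prod_mul_distrib]
      _ = (∑ c : Bool, Real.sqrt (RC ε c) * Real.sqrt (RC 0 c)) ^ n :=
          (Fintype.sum_pow (fun c => Real.sqrt (RC ε c) * Real.sqrt (RC 0 c)) n).symm
      _ = ρ ^ n := by
          rw [Fintype.sum_bool, coor true, coor false, hρ]
          norm_num
          ring_nf
  -- the halving trick
  set D : ℝ := (∑ x ∈ A, p x) - ∑ x ∈ A, q x with hD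
  have habs : 2 * |D| ≤ ∑ x : Fin n → Bool, |p x - q x| := by
    have hsplit : ∑ x : Fin n → Bool, (p x - q x)
        = (∑ x ∈ A, (p x - q x)) + ∑ x ∈ Aᶜ, (p x - q x) :=
      (Finset.sum_add_sum_compl A _).symm
    have hzero : ∑ x : Fin n → Bool, (p x - q x) = 0 := by
      rw [Finset.sum_sub_distrib, key1, key2]; ring
    have hDA : D = ∑ x ∈ A, (p x - q x) := by
      rw [hD, Finset.sum_sub_distrib]
    have hDAc : ∑ x ∈ Aᶜ, (p x - q x) = -D := by
      rw [hDA]; linarith [hsplit, hzero]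
    have h1 : |D| ≤ ∑ x ∈ A, |p x - q x| := by
      rw [hDA]; exact Finset.abs_sum_le_sum_abs _ _
    have h2 : |D| ≤ ∑ x ∈ Aᶜ, |p x - q x| := by
      calc |D| = |∑ x ∈ Aᶜ, (p x - q x)| := by rw [hDAc, abs_neg]
        _ ≤ ∑ x ∈ Aᶜ, |p x - q x| := Finset.abs_sum_le_sum_abs _ _
    have := Finset.sum_add_sum_compl A fun x => |p x - q x|
    linarith
  -- Cauchy-Schwarz
  have cs : (∑ x : Fin n → Bool, |p x - q x|) ^ 2
      ≤ (∑ x : Fin n → Bool, (a x - b x) ^ 2) * ∑ x : Fin n → Bool, (a x + b x) ^ 2 := by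
    have hpt : ∀ x, |p x - q x| = |a x - b x| * (a x + b x) := by
      intro x
      have : p x - q x = (a x - b x) * (a x + b x) := by
        rw [← ha2 x, ← hb2 x]; ring
      rw [this, abs_mul, abs_of_nonneg (add_nonneg (ha0 x) (hb0 x))]
    calc (∑ x : Fin n → Bool, |p x - q x|) ^ 2
        = (∑ x : Fin n → Bool, |a x - b x| * (a x + b x)) ^ 2 := by
          congr 1; exact Finset.sum_congr rfl fun x _ => hpt x
      _ ≤ (∑ x : Fin n → Bool, |a x - b x| ^ 2) * ∑ x : Fin n → Bool, (a x + b x) ^ 2 :=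
          Finset.sum_mul_sq_le_sq_mul_sq _ _ _
      _ = (∑ x : Fin n → Bool, (a x - b x) ^ 2) * ∑ x : Fin n → Bool, (a x + b x) ^ 2 := by
          congr 1; exact Finset.sum_congr rfl fun x _ => sq_abs _
  have e1 : ∑ x : Fin n → Bool, (a x - b x) ^ 2 = 2 - 2 * ρ ^ n := by
    have : ∀ x, (a x - b x) ^ 2 = p x + q x - 2 * (a x * b x) := by
      intro x; rw [← ha2 x, ← hb2 x]; ring
    rw [Finset.sum_congr rfl fun x _ => this x]
    rw [Finset.sum_sub_distrib, Finset.sum_add_distrib, key1, key2, ← Finset.mul_sum, key3]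
    norm_num
  have e2 : ∑ x : Fin n → Bool, (a x + b x) ^ 2 = 2 + 2 * ρ ^ n := by
    have : ∀ x, (a x + b x) ^ 2 = p x + q x + 2 * (a x * b x) := by
      intro x; rw [← ha2 x, ← hb2 x]; ring
    rw [Finset.sum_congr rfl fun x _ => this x]
    rw [Finset.sum_add_distrib, Finset.sum_add_distrib, key1, key2, ← Finset.mul_sum, key3]
    norm_num
  have hρn1 : ρ ^ n ≤ 1 := pow_le_one₀ hρ0 hρ1
  -- Bernoulli
  have hbern : 1 - (n : ℝ) * (1 - ρ) ≤ ρ ^ n := by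
    have h1 := one_add_mul_le_pow (a := ρ - 1) (by linarith) n
    have h : 1 + (ρ - 1) = ρ := by ring
    rw [h] at h1
    linarith
  have hD2 : D ^ 2 ≤ (n : ℝ) * ε ^ 2 := by
    have hL1 : (∑ x : Fin n → Bool, |p x - q x|) ^ 2 ≤ (2 - 2 * ρ ^ n) * 4 := by
      calc (∑ x : Fin n → Bool, |p x - q x|) ^ 2
          ≤ (2 - 2 * ρ ^ n) * (2 + 2 * ρ ^ n) := by rw [← e1, ← e2]; exact cs
        _ ≤ (2 - 2 * ρ ^ n) * 4 :=
            mul_le_mul_of_nonneg_left (by linarith) (by linarith)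
    have hsum_nonneg : 0 ≤ ∑ x : Fin n → Bool, |p x - q x| :=
      Finset.sum_nonneg fun x _ => abs_nonneg _
    have h4 : (2 * |D|) ^ 2 ≤ (2 - 2 * ρ ^ n) * 4 := by
      calc (2 * |D|) ^ 2 ≤ (∑ x : Fin n → Bool, |p x - q x|) ^ 2 :=
            pow_le_pow_left₀ (by positivity) habs 2
        _ ≤ _ := hL1
    have hρbound : 1 - ρ ^ n ≤ (n : ℝ) * (ε ^ 2 / 2) := by
      have h1ρ : 1 - ρ ≤ ε ^ 2 / 2 := by linarith
      have : (n : ℝ) * (1 - ρ) ≤ (n : ℝ) * (ε ^ 2 / 2) :=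
        mul_le_mul_of_nonneg_left h1ρ (Nat.cast_nonneg n)
      linarith
    have hsq : D ^ 2 = |D| ^ 2 := (sq_abs D).symm
    nlinarith
  -- conclude
  have hgoal : |D| ≤ ε * Real.sqrt n := by
    have hrhs : (ε * Real.sqrt n) ^ 2 = ε ^ 2 * (n : ℝ) := by
      rw [mul_pow, Real.sq_sqrt (Nat.cast_nonneg n)]
    have h2 : D ^ 2 ≤ (ε * Real.sqrt n) ^ 2 := by rw [hrhs]; linarith [hD2]
    have h3 := Real.sqrt_le_sqrt h2
    rw [Real.sqrt_sq_eq_abs, Real.sqrt_sq (by positivity)] at h3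
    exact h3
  exact hgoal
end

section
/- Mistake bound for the majority vote algorithm with a perfect expert: Let there be K ≥ 1 experts and T rounds, with expert predictions z : [K] × [T] → {0,1} and correct labels z* : [T] → {0,1}. Assume some expert e* is perfect: z(e*, t) = z*(t) for all t ∈ [T]. For each round t, let S_t = {e ∈ [K] : z(e, s) = z*(s) for all s < t} be the set of experts that made no mistake before round t, and let b_t ∈ {0,1} be any prediction agreeing with a weak majority of S_t, i.e., |{e ∈ S_t : z(e,t) = b_t}| ≥ |{e ∈ S_t : z(e,t) ≠ b_t}|. Then the number of mistakes satisfies |{t ∈ [T] : b_t ≠ z*(t)}| ≤ log₂ K. -/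
/-!
A mistake of the algorithm means that at least half of the experts with a clean record voted
for the wrong label, so each mistake at least halves the set of surviving experts. Hence
`2 ^ (#mistakes) * #survivors ≤ K`, and the perfect expert keeps the final survivor set nonempty.
-/

open Finset

namespace MajorityVote

theorem two_mul_card_filter_ne_le {α β : Type*} [DecidableEq β] {s : Finset α} {f : α → β} {y : β}
    (h : #(s.filter (f · ≠ y)) ≤ #(s.filter (f · = y))) :
    2 * #(s.filter (f · ≠ y)) ≤ #s := by
  have := card_filter_add_card_filter_not (s := s) (f · = y)
  simp only [← ne_eq] at this
  omega

variable {α : Type*} [Fintype α] {T : ℕ} (z : α → Fin T → Bool) (zstar b : Fin T → Bool)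

-- Rounds are cut off at `n : ℕ` rather than at `t : Fin T`, so that `n = T` is available.
def survivors (n : ℕ) : Finset α :=
  univ.filter fun e => ∀ s : Fin T, (s : ℕ) < n → z e s = zstar s

def mistakesBefore (n : ℕ) : ℕ :=
  #(univ.filter fun t : Fin T => (t : ℕ) < n ∧ b t ≠ zstar t)

variable {z zstar b}

theorem survivors_succ (t : Fin T) :
    survivors z zstar (t + 1) = (survivors z zstar t).filter fun e => z e t = zstar t := by
  ext e
  simp only [survivors, mem_filter, mem_univ, true_and, Nat.lt_succ_iff_lt_or_eq, or_imp,
    forall_and, Fin.val_inj, forall_eq]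

theorem survivors_succ_subset (t : Fin T) :
    survivors z zstar (t + 1) ⊆ survivors z zstar t := by
  rw [survivors_succ]
  exact filter_subset _ _

theorem mistakesBefore_succ_le (t : Fin T) :
    mistakesBefore zstar b (t + 1) ≤ mistakesBefore zstar b t + 1 := by
  refine (card_le_card fun t' => ?_).trans (card_insert_le t _)
  simp only [mem_filter, mem_univ, true_and, mem_insert, Nat.lt_succ_iff_lt_or_eq, Fin.val_inj]
  tauto

theorem mistakesBefore_succ_of_eq {t : Fin T} (ht : b t = zstar t) :
    mistakesBefore zstar b (t + 1) = mistakesBefore zstar b t := by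
  simp only [mistakesBefore, Nat.lt_succ_iff_lt_or_eq, Fin.val_inj]
  congr 1
  ext t'
  simp only [mem_filter, mem_univ, true_and]
  constructor
  · rintro ⟨hlt | rfl, hne⟩
    · exact ⟨hlt, hne⟩
    · exact absurd ht hne
  · rintro ⟨hlt, hne⟩
    exact ⟨.inl hlt, hne⟩

theorem mistakesBefore_of_le {n : ℕ} (hn : T ≤ n) :
    mistakesBefore zstar b n = #(univ.filter fun t : Fin T => b t ≠ zstar t) := by
  simp only [mistakesBefore, fun t : Fin T => t.isLt.trans_le hn, true_and]

theorem two_mul_card_survivors_succ_le {t : Fin T} (ht : b t ≠ zstar t)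
    (hmaj : #((survivors z zstar t).filter (z · t ≠ b t)) ≤
      #((survivors z zstar t).filter (z · t = b t))) :
    2 * #(survivors z zstar (t + 1)) ≤ #(survivors z zstar t) := by
  have hsurv : survivors z zstar (t + 1) = (survivors z zstar t).filter (z · t ≠ b t) := by
    rw [survivors_succ]
    refine filter_congr fun e _ => ?_
    revert ht
    cases z e t <;> cases b t <;> cases zstar t <;> decide
  exact hsurv ▸ two_mul_card_filter_ne_le hmaj

theorem two_pow_mistakesBefore_mul_card_survivors_le
    (hmaj : ∀ t : Fin T, #((survivors z zstar t).filter (z · t ≠ b t)) ≤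
      #((survivors z zstar t).filter (z · t = b t)))
    {n : ℕ} (hn : n ≤ T) :
    2 ^ mistakesBefore zstar b n * #(survivors z zstar n) ≤ Fintype.card α := by
  induction n with
  | zero => simpa [mistakesBefore] using card_le_univ _
  | succ n ih =>
    obtain ⟨t, rfl⟩ : ∃ t : Fin T, (t : ℕ) = n := ⟨⟨n, hn⟩, rfl⟩
    refine le_trans ?_ (ih t.isLt.le)
    by_cases ht : b t = zstar t
    · rw [mistakesBefore_succ_of_eq ht]
      gcongr
      exact survivors_succ_subset t
    · calc 2 ^ mistakesBefore zstar b (t + 1) * #(survivors z zstar (t + 1))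
          ≤ 2 ^ (mistakesBefore zstar b t + 1) * #(survivors z zstar (t + 1)) := by
            gcongr
            · norm_num
            · exact mistakesBefore_succ_le t
        _ = 2 ^ mistakesBefore zstar b t * (2 * #(survivors z zstar (t + 1))) := by ring
        _ ≤ 2 ^ mistakesBefore zstar b t * #(survivors z zstar t) := by
            gcongr
            exact two_mul_card_survivors_succ_le ht (hmaj t)

end MajorityVote

open MajorityVote

theorem majority_vote_mistake_bound_general (K T : ℕ)
    (z : Fin K → Fin T → Bool) (zstar : Fin T → Bool)
    (estar : Fin K) (hperfect : ∀ t, z estar t = zstar t)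
    (b : Fin T → Bool)
    (hmaj : ∀ t : Fin T,
      ((Finset.univ.filter (fun e : Fin K =>
          (∀ s : Fin T, s < t → z e s = zstar s) ∧ z e t ≠ b t)).card) ≤
      ((Finset.univ.filter (fun e : Fin K =>
          (∀ s : Fin T, s < t → z e s = zstar s) ∧ z e t = b t)).card)) :
    ((Finset.univ.filter (fun t : Fin T => b t ≠ zstar t)).card : ℝ) ≤ Real.logb 2 K := by
  have hmaj_survivors (t : Fin T) : #((survivors z zstar t).filter (z · t ≠ b t)) ≤
      #((survivors z zstar t).filter (z · t = b t)) := by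
    simpa only [survivors, filter_filter, Fin.lt_def] using hmaj t
  have hbound := two_pow_mistakesBefore_mul_card_survivors_le hmaj_survivors le_rfl
  rw [mistakesBefore_of_le le_rfl, Fintype.card_fin] at hbound
  have hsurv : 0 < #(survivors z zstar T) :=
    card_pos.2 ⟨estar, by simp [survivors, hperfect]⟩
  have hpow : 2 ^ #(univ.filter fun t => b t ≠ zstar t) ≤ K :=
    (Nat.le_mul_of_pos_right _ hsurv).trans hbound
  have hKpos : (0 : ℝ) < K := by exact_mod_cast (Nat.two_pow_pos _).trans_le hpow
  rw [Real.le_logb_iff_rpow_le one_lt_two hKpos, Real.rpow_natCast]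
  exact_mod_cast hpow

/-- **Mistake bound for the majority vote algorithm with a perfect expert.**
`K` experts make binary predictions `z e t` over `T` rounds with correct labels `zstar t`.
Some expert `estar` is perfect. `S_t` is the set of experts with no mistakes before round
`t`, and the algorithm's prediction `b t` agrees with a weak majority of `S_t`.
Then the number of mistakes is at most `log₂ K`. -/
theorem majority_vote_mistake_bound (K T : ℕ) (hK : 1 ≤ K)
    (z : Fin K → Fin T → Bool) (zstar : Fin T → Bool)
    (estar : Fin K) (hperfect : ∀ t, z estar t = zstar t)
    (b : Fin T → Bool)
    (hmaj : ∀ t : Fin T,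
      ((Finset.univ.filter (fun e : Fin K =>
          (∀ s : Fin T, s < t → z e s = zstar s) ∧ z e t ≠ b t)).card) ≤
      ((Finset.univ.filter (fun e : Fin K =>
          (∀ s : Fin T, s < t → z e s = zstar s) ∧ z e t = b t)).card)) :
    ((Finset.univ.filter (fun t : Fin T => b t ≠ zstar t)).card : ℝ) ≤ Real.logb 2 K :=
  majority_vote_mistake_bound_general K T z zstar estar hperfect b hmaj
end

section
/- Mistake bound for the Weighted Majority Algorithm: Let there be K ≥ 2 experts, T rounds, and a parameter ε ∈ (0,1). For each round t ∈ [T], let S_t ⊆ [K] be the set of experts that err at round t, define weights w_1(e) = 1 and w_{t+1}(e) = w_t(e)·(1−ε) if e ∈ S_t and w_{t+1}(e) = w_t(e) otherwise, and let W_t = Σ_{e∈[K]} w_t(e). Let B ⊆ [T] be any set of rounds such that Σ_{e∈S_t} w_t(e) ≥ W_t/2 for every t ∈ B (the rounds in which the weighted majority is wrong). Let cost* = min_{e∈[K]} |{t ∈ [T] : e ∈ S_t}| be the number of mistakes of the best expert. Then |B| < (2/(1−ε))·cost* + (2/ε)·ln K. -/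
/-!
Track the total weight `W t = ∑ e, w t e`. It never increases, and in every round of `B` the
erring experts lose `ε` times at least half of it, so `W T ≤ (1 - ε/2) ^ |B| · K`. On the other
hand `W T` strictly exceeds the weight `(1 - ε) ^ cost*` of the best expert, because `K ≥ 2` and
all weights are positive. Taking logarithms and using `log (1 - ε/2) ≤ -ε/2` and
`log (1 - ε) ≥ -ε/(1 - ε)` gives the bound.
-/

open Finset

theorem le_prod_range_mul_of_le_mul {a c : ℕ → ℝ} {T : ℕ} (hc : ∀ t < T, 0 ≤ c t)
    (h : ∀ t < T, a (t + 1) ≤ c t * a t) : a T ≤ (∏ t ∈ range T, c t) * a 0 := by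
  induction T with
  | zero => simp
  | succ T ih =>
    calc a (T + 1) ≤ c T * a T := h T T.lt_succ_self
      _ ≤ c T * ((∏ t ∈ range T, c t) * a 0) :=
          mul_le_mul_of_nonneg_left (ih (fun t ht => hc t (by omega)) fun t ht => h t (by omega))
            (hc T T.lt_succ_self)
      _ = (∏ t ∈ range (T + 1), c t) * a 0 := by rw [prod_range_succ]; ring

theorem le_pow_card_mul_of_le_mul {a : ℕ → ℝ} {r : ℝ} {T : ℕ} {B : Finset ℕ} (hr : 0 ≤ r)
    (hB : B ⊆ range T) (hle : ∀ t < T, a (t + 1) ≤ a t) (hleB : ∀ t ∈ B, a (t + 1) ≤ r * a t) :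
    a T ≤ r ^ #B * a 0 := by
  have hstep : ∀ t < T, a (t + 1) ≤ (if t ∈ B then r else 1) * a t := by
    intro t ht
    split_ifs with htB
    · exact hleB t htB
    · simpa using hle t ht
  have hprod : ∏ t ∈ range T, (if t ∈ B then r else 1) = r ^ #B := by
    rw [prod_ite_mem, inter_eq_right.mpr hB, prod_const]
  calc a T ≤ (∏ t ∈ range T, (if t ∈ B then r else 1)) * a 0 :=
        le_prod_range_mul_of_le_mul (fun t _ => by split_ifs <;> linarith) hstep
    _ = r ^ #B * a 0 := by rw [hprod]

section MultiplicativeWeights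

variable {ι : Type*} [DecidableEq ι] {ε : ℝ}

theorem weight_eq_one_sub_pow_card (S : ℕ → Finset ι) {w : ℕ → ι → ℝ} {T : ℕ}
    (hw0 : ∀ e, w 0 e = 1)
    (hw : ∀ t < T, ∀ e, w (t + 1) e = if e ∈ S t then w t e * (1 - ε) else w t e) (e : ι) :
    w T e = (1 - ε) ^ #{t ∈ range T | e ∈ S t} := by
  induction T with
  | zero => simp [hw0]
  | succ T ih =>
    rw [hw T T.lt_succ_self e, ih (fun t ht => hw t (by omega)), range_add_one, filter_insert]
    split_ifs
    · rw [card_insert_of_notMem (by simp), pow_succ]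
    · rfl

theorem sum_eq_sub_of_update [Fintype ι] {s : Finset ι} {f g : ι → ℝ}
    (hg : ∀ e, g e = if e ∈ s then f e * (1 - ε) else f e) :
    ∑ e, g e = ∑ e, f e - ε * ∑ e ∈ s, f e := by
  have hg' : ∀ e, g e = f e - ε * (if e ∈ s then f e else 0) := by
    intro e
    rw [hg e]
    split_ifs <;> ring
  simp only [hg', sum_sub_distrib, ← mul_sum, sum_ite_mem, univ_inter]

theorem sum_le_of_update [Fintype ι] {s : Finset ι} {f g : ι → ℝ} (hε : 0 ≤ ε) (hf : ∀ e, 0 ≤ f e)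
    (hg : ∀ e, g e = if e ∈ s then f e * (1 - ε) else f e) :
    ∑ e, g e ≤ ∑ e, f e := by
  rw [sum_eq_sub_of_update hg]
  linarith [mul_nonneg hε (sum_nonneg fun e _ => hf e : 0 ≤ ∑ e ∈ s, f e)]

theorem sum_le_one_sub_half_mul_of_update [Fintype ι] {s : Finset ι} {f g : ι → ℝ} (hε : 0 ≤ ε)
    (hmaj : (∑ e, f e) / 2 ≤ ∑ e ∈ s, f e)
    (hg : ∀ e, g e = if e ∈ s then f e * (1 - ε) else f e) :
    ∑ e, g e ≤ (1 - ε / 2) * ∑ e, f e := by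
  rw [sum_eq_sub_of_update hg]
  linarith [mul_le_mul_of_nonneg_left hmaj hε]

end MultiplicativeWeights

theorem natCast_lt_of_one_sub_pow_lt_one_sub_half_pow_mul {ε K : ℝ} {b c : ℕ} (hε0 : 0 < ε)
    (hε1 : ε < 1) (hK : 0 < K) (h : (1 - ε) ^ c < (1 - ε / 2) ^ b * K) :
    (b : ℝ) < 2 / (1 - ε) * c + 2 / ε * Real.log K := by
  have hε1' : 0 < 1 - ε := by linarith
  have hlog := Real.log_lt_log (pow_pos hε1' c) h
  rw [Real.log_mul (pow_pos (by linarith) b).ne' hK.ne', Real.log_pow, Real.log_pow] at hlog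
  have hlog_lower : -(ε / (1 - ε)) ≤ Real.log (1 - ε) := by
    have := Real.one_sub_inv_le_log_of_pos hε1'
    rwa [show 1 - (1 - ε)⁻¹ = -(ε / (1 - ε)) by field_simp; ring] at this
  have hlog_upper : Real.log (1 - ε / 2) ≤ -(ε / 2) := by
    linarith [Real.log_le_sub_one_of_pos (show 0 < 1 - ε / 2 by linarith)]
  have hkey : (b : ℝ) * (ε / 2) < c * (ε / (1 - ε)) + Real.log K := by
    linarith [mul_le_mul_of_nonneg_left hlog_lower (Nat.cast_nonneg c),
      mul_le_mul_of_nonneg_left hlog_upper (Nat.cast_nonneg b)]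
  calc (b : ℝ) < (c * (ε / (1 - ε)) + Real.log K) / (ε / 2) := by
        rwa [lt_div_iff₀ (by positivity)]
    _ = 2 / (1 - ε) * c + 2 / ε * Real.log K := by field_simp

/-- **Mistake bound for the Weighted Majority Algorithm.**
`K ≥ 2` experts over `T` rounds with parameter `ε ∈ (0,1)`. `S t` is the set of experts
erring at round `t`; weights start at `1` and are multiplied by `(1-ε)` upon each mistake.
`B` is any set of rounds in which the erring experts carry at least half of the total
weight (the rounds where the weighted majority vote is wrong). With
`cost* = min_e #{t : e ∈ S t}` the number of mistakes of the best expert,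
`|B| < (2/(1-ε))·cost* + (2/ε)·ln K`. -/
theorem weighted_majority_mistake_bound (K T : ℕ) (hK : 2 ≤ K)
    (ε : ℝ) (hε0 : 0 < ε) (hε1 : ε < 1)
    (S : ℕ → Finset (Fin K))
    (w : ℕ → Fin K → ℝ)
    (hw0 : ∀ e, w 0 e = 1)
    (hw : ∀ t < T, ∀ e : Fin K, w (t + 1) e = if e ∈ S t then w t e * (1 - ε) else w t e)
    (B : Finset ℕ) (hB : B ⊆ Finset.range T)
    (hmaj : ∀ t ∈ B, (∑ e : Fin K, w t e) / 2 ≤ ∑ e ∈ S t, w t e) :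
    (B.card : ℝ) <
      (2 / (1 - ε)) *
        ((Finset.univ.inf' ⟨⟨0, by omega⟩, Finset.mem_univ _⟩
          (fun e : Fin K => ((Finset.range T).filter (fun t => e ∈ S t)).card) : ℕ) : ℝ)
      + (2 / ε) * Real.log K := by
  have hpos : ∀ t ≤ T, ∀ e, 0 < w t e := fun t ht e => by
    rw [weight_eq_one_sub_pow_card S hw0 (fun s hs => hw s (by omega)) e]
    exact pow_pos (by linarith) _
  obtain ⟨e₀, -, hbest⟩ := exists_mem_eq_inf' ⟨⟨0, by omega⟩, mem_univ _⟩
    (fun e : Fin K => #{t ∈ range T | e ∈ S t})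
  have : Nontrivial (Fin K) := Fin.nontrivial_iff_two_le.mpr hK
  obtain ⟨e₁, he₁⟩ := exists_ne e₀
  have hlower : (1 - ε) ^ #{t ∈ range T | e₀ ∈ S t} < ∑ e, w T e := by
    rw [← weight_eq_one_sub_pow_card S hw0 hw]
    exact single_lt_sum he₁ (mem_univ _) (mem_univ _) (hpos T le_rfl e₁)
      fun e _ _ => (hpos T le_rfl e).le
  have hupper : ∑ e, w T e ≤ (1 - ε / 2) ^ #B * K := by
    have := le_pow_card_mul_of_le_mul (a := fun t => ∑ e, w t e) (by linarith) hB
      (fun t ht => sum_le_of_update hε0.le (fun e => (hpos t ht.le e).le) (hw t ht))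
      (fun t htB => sum_le_one_sub_half_mul_of_update hε0.le (hmaj t htB)
        (hw t (mem_range.mp (hB htB))))
    simpa [hw0] using this
  rw [hbest]
  exact natCast_lt_of_one_sub_pow_lt_one_sub_half_pow_mul hε0 hε1 (by positivity)
    (hlower.trans_le hupper)
end

section
/- Core telescoping inequality for Hedge with second-order terms: Let K ≥ 1, T ≥ 1, ε ∈ (0,1/2), and set α = ln(1/(1−ε)) and β = α². Let c_1,...,c_T be arbitrary cost vectors with c_t(a) ≥ 0 for all arms a ∈ [K]. Define weights w_1(a) = 1 and w_{t+1}(a) = w_t(a)·(1−ε)^{c_t(a)}, W_t = Σ_{a∈[K]} w_t(a), distributions p_t(a) = w_t(a)/W_t, and the quantities F_t = Σ_{a∈[K]} p_t(a)·c_t(a) and G_t = Σ_{a∈[K]} p_t(a)·c_t(a)². Then Σ_{t=1}^T (α·F_t − β·G_t) ≤ ln K − ln(1−ε)·cost*, where cost* = min_{a∈[K]} Σ_{t=1}^T c_t(a). -/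
/-!
Track the potential `log W_t`, where `W_t = ∑_a w_t(a)`. Since
`W_{t+1} = W_t · ∑_a p_t(a) (1-ε)^{c_t(a)}`, the bounds `log s ≤ s - 1` and
`e^{-y} ≤ 1 - y + y²` (for `y ≥ 0`) give `log W_{t+1} - log W_t ≤ -(α F_t - β G_t)`.
Summing telescopes to `log W_0 - log W_T = log K - log W_T`, and `W_T` is at least the
weight `(1-ε)^{cost*}` of the best arm.
-/

open Real Finset

lemma Fin.sum_univ_sub {G : Type*} [AddCommGroup G] (u : ℕ → G) (n : ℕ) :
    ∑ i : Fin n, (u (i + 1) - u i) = u n - u 0 := by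
  rw [Fin.sum_univ_eq_sum_range (fun i => u (i + 1) - u i), sum_range_sub]

lemma Real.exp_neg_le_one_sub_add_sq {y : ℝ} (hy : 0 ≤ y) : exp (-y) ≤ 1 - y + y ^ 2 := by
  rw [exp_neg, inv_le_iff_one_le_mul₀' (exp_pos y)]
  calc (1 : ℝ) ≤ (1 + y) * (1 - y + y ^ 2) := by nlinarith [pow_nonneg hy 3]
    _ ≤ exp y * (1 - y + y ^ 2) := by
      gcongr
      · nlinarith [sq_nonneg (y - 1 / 2)]
      · linarith [add_one_le_exp y]

lemma Real.rpow_le_one_add_log_mul_add_sq {x c : ℝ} (hx0 : 0 < x) (hx1 : x ≤ 1) (hc : 0 ≤ c) :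
    x ^ c ≤ 1 + log x * c + (log x * c) ^ 2 := by
  have hy : 0 ≤ -(log x * c) :=
    neg_nonneg.2 (mul_nonpos_of_nonpos_of_nonneg (log_nonpos hx0.le hx1) hc)
  rw [rpow_def_of_pos hx0, ← neg_neg (log x * c)]
  simpa only [neg_neg, neg_sq, sub_neg_eq_add] using exp_neg_le_one_sub_add_sq hy

section Weights

variable {ι : Type*} [Fintype ι] {x : ℝ} {c : ι → ℝ}

lemma log_sum_mul_rpow_le {p : ι → ℝ} (hp : ∀ a, 0 ≤ p a) (hp1 : ∑ a, p a = 1)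
    (hc : ∀ a, 0 ≤ c a) (hx0 : 0 < x) (hx1 : x ≤ 1) :
    log (∑ a, p a * x ^ c a) ≤ log x * ∑ a, p a * c a + log x ^ 2 * ∑ a, p a * c a ^ 2 := by
  obtain ⟨b, -, hb⟩ := exists_ne_zero_of_sum_ne_zero (hp1.trans_ne one_ne_zero)
  have hpos : 0 < ∑ a, p a * x ^ c a :=
    sum_pos' (fun a _ => mul_nonneg (hp a) (rpow_nonneg hx0.le _))
      ⟨b, mem_univ b, mul_pos ((hp b).lt_of_ne' hb) (rpow_pos_of_pos hx0 _)⟩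
  calc log (∑ a, p a * x ^ c a) ≤ ∑ a, p a * x ^ c a - 1 := log_le_sub_one_of_pos hpos
    _ ≤ ∑ a, p a * (1 + log x * c a + (log x * c a) ^ 2) - 1 := by
      gcongr with a
      exacts [hp a, rpow_le_one_add_log_mul_add_sq hx0 hx1 (hc a)]
    _ = ∑ a, (p a + (log x * (p a * c a) + log x ^ 2 * (p a * c a ^ 2))) - 1 := by
      congr 1
      exact sum_congr rfl fun a _ => by ring
    _ = log x * ∑ a, p a * c a + log x ^ 2 * ∑ a, p a * c a ^ 2 := by
      rw [sum_add_distrib, sum_add_distrib, hp1, ← mul_sum, ← mul_sum]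
      ring

lemma log_sum_mul_rpow_sub_log_sum_le [Nonempty ι] {w : ι → ℝ} (hw : ∀ a, 0 < w a)
    (hc : ∀ a, 0 ≤ c a) (hx0 : 0 < x) (hx1 : x ≤ 1) :
    log (∑ a, w a * x ^ c a) - log (∑ a, w a) ≤
      log x * ∑ a, w a / (∑ b, w b) * c a +
        log x ^ 2 * ∑ a, w a / (∑ b, w b) * c a ^ 2 := by
  have hW : 0 < ∑ b, w b := sum_pos (fun a _ => hw a) univ_nonempty
  have hsplit : ∑ a, w a * x ^ c a = (∑ b, w b) * ∑ a, w a / (∑ b, w b) * x ^ c a := by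
    rw [mul_sum]
    exact sum_congr rfl fun a _ => by field_simp
  have hS : 0 < ∑ a, w a / (∑ b, w b) * x ^ c a :=
    sum_pos (fun a _ => mul_pos (div_pos (hw a) hW) (rpow_pos_of_pos hx0 _)) univ_nonempty
  rw [hsplit, log_mul hW.ne' hS.ne', add_sub_cancel_left]
  exact log_sum_mul_rpow_le (fun a => (div_pos (hw a) hW).le)
    (by rw [← sum_div, div_self hW.ne']) hc hx0 hx1

end Weights

section Recursion

variable {T : ℕ} {u : ℕ → ℝ}

lemma pos_of_succ_eq_mul {f : Fin T → ℝ} (h0 : 0 < u 0) (hf : ∀ t, 0 < f t)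
    (hu : ∀ t : Fin T, u (t.1 + 1) = u t.1 * f t) {t : ℕ} (ht : t ≤ T) : 0 < u t := by
  induction t with
  | zero => exact h0
  | succ n ih =>
    rw [hu ⟨n, ht⟩]
    exact mul_pos (ih (Nat.le_of_succ_le ht)) (hf _)

lemma log_eq_log_mul_sum_of_succ_eq_mul_rpow {x : ℝ} (hx : 0 < x) {c : Fin T → ℝ}
    (h0 : u 0 = 1) (hu : ∀ t : Fin T, u (t.1 + 1) = u t.1 * x ^ c t) :
    log (u T) = log x * ∑ t, c t := by
  have hpos : ∀ t ≤ T, 0 < u t := fun t =>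
    pos_of_succ_eq_mul (h0 ▸ one_pos) (fun t => rpow_pos_of_pos hx (c t)) hu
  have hstep : ∀ t : Fin T, log (u (t + 1)) - log (u t) = log x * c t := fun t => by
    rw [hu t, log_mul (hpos t t.2.le).ne' (rpow_pos_of_pos hx _).ne', log_rpow hx]
    ring
  calc log (u T) = ∑ t : Fin T, (log (u (t + 1)) - log (u t)) := by
        rw [Fin.sum_univ_sub (fun t => log (u t)), h0, log_one, sub_zero]
    _ = log x * ∑ t, c t := by rw [mul_sum, sum_congr rfl fun t _ => hstep t]

end Recursion

/-- **Core telescoping inequality for Hedge with second-order terms.**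
With `α = ln(1/(1-ε))` and `β = α²`, nonnegative costs `c t a`, Hedge weights
`w 0 a = 1`, `w (t+1) a = w t a · (1-ε)^(c t a)`, distributions
`p t a = w t a / ∑ a', w t a'`, and per-round quantities
`F_t = ∑_a p t a · c t a` and `G_t = ∑_a p t a · (c t a)²`, we have
`∑_t (α F_t − β G_t) ≤ ln K − ln(1−ε) · cost*` where `cost* = min_a ∑_t c t a`. -/
theorem hedge_telescoping_inequality (K T : ℕ) (hK : 1 ≤ K)
    (ε : ℝ) (hε0 : 0 < ε) (hε1 : ε < 1 / 2)
    (α β : ℝ) (hα : α = Real.log (1 / (1 - ε))) (hβ : β = α ^ 2)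
    (c : Fin T → Fin K → ℝ) (hc : ∀ t a, 0 ≤ c t a)
    (w : ℕ → Fin K → ℝ)
    (hw0 : ∀ a, w 0 a = 1)
    (hw : ∀ (t : Fin T) (a : Fin K), w (t.1 + 1) a = w t.1 a * (1 - ε) ^ (c t a))
    (p : Fin T → Fin K → ℝ)
    (hp : ∀ (t : Fin T) (a : Fin K), p t a = w t.1 a / ∑ a', w t.1 a') :
    (∑ t : Fin T,
        (α * (∑ a : Fin K, p t a * c t a) - β * ∑ a : Fin K, p t a * (c t a) ^ 2))
      ≤ Real.log K - Real.log (1 - ε) *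
          (Finset.univ.inf' ⟨⟨0, by omega⟩, Finset.mem_univ _⟩
            (fun a : Fin K => ∑ t : Fin T, c t a)) := by
  have : Nonempty (Fin K) := ⟨⟨0, by omega⟩⟩
  have hx0 : 0 < 1 - ε := by linarith
  have hx1 : 1 - ε ≤ 1 := by linarith
  have hα' : α = -log (1 - ε) := by rw [hα, one_div, log_inv]
  have hwpos : ∀ t ≤ T, ∀ a, 0 < w t a := fun t ht a =>
    pos_of_succ_eq_mul (u := (w · a)) (by rw [hw0]; exact one_pos)
      (fun s => rpow_pos_of_pos hx0 _) (hw · a) ht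
  set W : ℕ → ℝ := fun t => ∑ a, w t a with hW
  have hround : ∀ t : Fin T, α * (∑ a, p t a * c t a) - β * ∑ a, p t a * c t a ^ 2 ≤
      -(log (W (t + 1)) - log (W t)) := fun t => by
    have := log_sum_mul_rpow_sub_log_sum_le (fun a => hwpos t t.2.le a) (hc t) hx0 hx1
    simp only [hW, hw t, hp t, hβ, hα'] at this ⊢
    linarith
  obtain ⟨a, -, ha⟩ :=
    exists_mem_eq_inf' ⟨⟨0, by omega⟩, mem_univ _⟩ fun a => ∑ t, c t a
  have hbest : log (1 - ε) * ∑ t, c t a ≤ log (W T) := by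
    rw [← log_eq_log_mul_sum_of_succ_eq_mul_rpow (u := (w · a)) hx0 (hw0 a) (hw · a)]
    exact log_le_log (hwpos T le_rfl a)
      (single_le_sum (fun b _ => (hwpos T le_rfl b).le) (mem_univ a))
  have hW0 : W 0 = K := by simp [hW, hw0]
  rw [ha]
  calc _ ≤ ∑ t : Fin T, -(log (W (t + 1)) - log (W t)) := sum_le_sum fun t _ => hround t
    _ = log (W 0) - log (W T) := by
      rw [sum_neg_distrib, Fin.sum_univ_sub (fun t => log (W t)), neg_sub]
    _ ≤ log K - log (1 - ε) * ∑ t, c t a := by rw [hW0]; linarith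
end

section
/- Be-the-Perturbed-Leader is near-optimal: Let A ⊆ [0,1]^d be a nonempty set of actions and let M : ℝ^d → A be an optimization oracle, i.e., M(v) ∈ A and M(v)·v ≤ a·v for every v ∈ ℝ^d and every a ∈ A. Fix ε > 0, let v_0 ∈ [−1/ε, 1/ε]^d be any perturbation vector, and let v_1,...,v_T ∈ ℝ^d be any cost vectors. Then for every a ∈ A, Σ_{t=1}^T v_t · M(v_0 + v_1 + ... + v_t) ≤ Σ_{t=1}^T v_t · a + d/ε, where · denotes the Euclidean inner product. -/
/-!
Be-the-leader: playing in each round the minimiser of the cumulative cost up to and including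
that round beats every fixed action, by induction on the rounds with the induction hypothesis
applied to the newest leader as the fixed action. Treating the perturbation `v₀` as a round
zero, the only loss against a fixed `a` is the round-zero term `v₀ ⬝ᵥ (a - M v₀)`, whose `d`
coordinates are each at most `1/ε` because `|v₀ k| ≤ 1/ε` and `|a k - M v₀ k| ≤ 1`.
-/

open Finset Matrix

section BeTheLeader

variable {ι R : Type*} [Fintype ι] [CommRing R] [LinearOrder R] [IsOrderedRing R]
  {A : Set (ι → R)} {M : (ι → R) → ι → R}

theorem be_the_leader {τ : Type*} [LinearOrder τ]
    (hM : ∀ v, M v ∈ A) (hopt : ∀ v, ∀ a ∈ A, M v ⬝ᵥ v ≤ a ⬝ᵥ v)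
    (v₀ : ι → R) (v : τ → ι → R) (s : Finset τ) :
    ∀ a ∈ A, v₀ ⬝ᵥ M v₀ + ∑ t ∈ s, v t ⬝ᵥ M (v₀ + ∑ u ∈ s with u ≤ t, v u)
      ≤ (v₀ + ∑ t ∈ s, v t) ⬝ᵥ a := by
  classical
  induction s using Finset.induction_on_max with
  | empty =>
    intro a ha
    simpa [dotProduct_comm] using hopt v₀ a ha
  | insert m s hlt ih =>
    intro a ha
    set S := v₀ + ∑ t ∈ s, v t
    have hS : v₀ + ∑ t ∈ insert m s, v t = S + v m := by
      rw [sum_insert fun hm => (hlt m hm).false, add_left_comm, add_comm]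
    have hpast : ∀ t ∈ s, {u ∈ insert m s | u ≤ t} = {u ∈ s | u ≤ t} := fun t ht => by
      rw [filter_insert, if_neg (hlt t ht).not_ge]
    have hnow : {u ∈ insert m s | u ≤ m} = insert m s :=
      filter_true_of_mem fun u hu => (mem_insert.1 hu).elim le_of_eq fun h => (hlt u h).le
    have hprev := ih (M (S + v m)) (hM _)
    calc _ = v₀ ⬝ᵥ M v₀ + ∑ t ∈ s, v t ⬝ᵥ M (v₀ + ∑ u ∈ s with u ≤ t, v u)
            + v m ⬝ᵥ M (S + v m) := by
          rw [sum_insert fun hm => (hlt m hm).false, hnow, hS,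
            sum_congr rfl fun t ht => by rw [hpast t ht]]
          abel
      _ ≤ S ⬝ᵥ M (S + v m) + v m ⬝ᵥ M (S + v m) := by gcongr
      _ = M (S + v m) ⬝ᵥ (S + v m) := by rw [← add_dotProduct, dotProduct_comm]
      _ ≤ a ⬝ᵥ (S + v m) := hopt _ a ha
      _ = _ := by rw [hS, dotProduct_comm]

theorem dotProduct_le_card_mul_of_abs_le {x y : ι → R} {r s : R}
    (hx : ∀ k, |x k| ≤ r) (hy : ∀ k, |y k| ≤ s) :
    x ⬝ᵥ y ≤ Fintype.card ι * (r * s) := by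
  rw [← nsmul_eq_mul]
  refine sum_le_card_nsmul _ _ _ fun k _ => ?_
  calc x k * y k ≤ |x k| * |y k| := (le_abs_self _).trans (abs_mul _ _).le
    _ ≤ r * s := mul_le_mul (hx k) (hy k) (abs_nonneg _) ((abs_nonneg _).trans (hx k))

end BeTheLeader

theorem be_the_perturbed_leader_general (d T : ℕ) (ε : ℝ)
    (A : Set (Fin d → ℝ))
    (hA01 : ∀ a ∈ A, ∀ k, a k ∈ Set.Icc (0 : ℝ) 1)
    (M : (Fin d → ℝ) → (Fin d → ℝ))
    (hM : ∀ v, M v ∈ A)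
    (hopt : ∀ v, ∀ a ∈ A, ∑ k, M v k * v k ≤ ∑ k, a k * v k)
    (v0 : Fin d → ℝ) (hv0 : ∀ k, v0 k ∈ Set.Icc (-(1 / ε)) (1 / ε))
    (v : Fin T → Fin d → ℝ) :
    ∀ a ∈ A,
      (∑ t : Fin T, ∑ k, v t k * M (v0 + ∑ s ∈ Finset.univ.filter (fun s => s ≤ t), v s) k)
        ≤ (∑ t : Fin T, ∑ k, v t k * a k) + d / ε := by
  intro a ha
  have hleader := be_the_leader hM hopt v0 v univ a ha
  have hperturbation : v0 ⬝ᵥ (a - M v0) ≤ d / ε := by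
    have hgap : ∀ k, |(a - M v0) k| ≤ 1 := fun k =>
      abs_sub_le_of_nonneg_of_le (hA01 a ha k).1 (hA01 a ha k).2
        (hA01 _ (hM v0) k).1 (hA01 _ (hM v0) k).2
    have h := dotProduct_le_card_mul_of_abs_le (fun k => abs_le.2 (hv0 k)) hgap
    rwa [Fintype.card_fin, mul_one, mul_one_div] at h
  rw [add_dotProduct, sum_dotProduct] at hleader
  rw [dotProduct_sub] at hperturbation
  change ∑ t, v t ⬝ᵥ M _ ≤ ∑ t, v t ⬝ᵥ a + d / ε
  linarith

/-- **Be-the-Perturbed-Leader is near-optimal.**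
Let `A ⊆ [0,1]^d` be a nonempty action set with optimization oracle `M`
(i.e. `M v ∈ A` minimizes the linear cost `a ↦ a·v` over `A`). For any `ε > 0`, any
perturbation `v_0 ∈ [−1/ε, 1/ε]^d`, and any cost vectors `v_1,…,v_T`, the
Be-the-Perturbed-Leader strategy satisfies, for every `a ∈ A`,
`∑_t v_t · M(v_0 + v_1 + ⋯ + v_t) ≤ ∑_t v_t · a + d/ε`. -/
theorem be_the_perturbed_leader (d T : ℕ) (ε : ℝ) (hε : 0 < ε)
    (A : Set (Fin d → ℝ)) (hA : A.Nonempty)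
    (hA01 : ∀ a ∈ A, ∀ k, a k ∈ Set.Icc (0 : ℝ) 1)
    (M : (Fin d → ℝ) → (Fin d → ℝ))
    (hM : ∀ v, M v ∈ A)
    (hopt : ∀ v, ∀ a ∈ A, ∑ k, M v k * v k ≤ ∑ k, a k * v k)
    (v0 : Fin d → ℝ) (hv0 : ∀ k, v0 k ∈ Set.Icc (-(1 / ε)) (1 / ε))
    (v : Fin T → Fin d → ℝ) :
    ∀ a ∈ A,
      (∑ t : Fin T, ∑ k, v t k * M (v0 + ∑ s ∈ Finset.univ.filter (fun s => s ≤ t), v s) k)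
        ≤ (∑ t : Fin T, ∑ k, v t k * a k) + d / ε :=
  be_the_perturbed_leader_general d T ε A hA01 M hM hopt v0 hv0 v
end

section
/- Nash equilibria of the Lagrangian game characterize the LP optimum for Bandits with Knapsacks: Let K ≥ 1 arms and d ≥ 1 resources be given, with reals 0 < B ≤ T, reward vector r : [K] → [0,1], and consumption values c_i(a) ∈ [0,1] for each resource i ∈ [d] and arm a ∈ [K]. Assume there is a resource i₀ ∈ [d] with c_{i₀}(a) = B/T for every arm a (the time resource), and an arm a₀ ∈ [K] with r(a₀) = 0 and c_i(a₀) = 0 for every resource i ≠ i₀ (the null arm). For D ∈ Δ_K write r(D) = Σ_a D(a)·r(a) and c_i(D) = Σ_a D(a)·c_i(a), and define the Lagrange function L(D, λ) = r(D) + Σ_{i∈[d]} λ_i·(1 − (T/B)·c_i(D)) for λ ∈ Δ_d. Let OPT_LP = max { r(D) : D ∈ Δ_K, c_i(D) ≤ B/T for all i ∈ [d] }. Suppose (D*, λ*) ∈ Δ_K × Δ_d is a Nash equilibrium of the Lagrangian game, i.e., L(D*, λ) ≥ L(D*, λ*) ≥ L(D, λ*) for all D ∈ Δ_K and λ ∈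 Δ_d. Then: (a) 1 − (T/B)·c_i(D*) ≥ 0 for every resource i, with equality whenever λ*_i > 0; (b) D* is an optimal solution of the LP, i.e., c_i(D*) ≤ B/T for all i and r(D*) = OPT_LP; and (c) L(D*, λ*) = OPT_LP. -/
/-- Expected per-round reward `r(D) = ∑ a, D a · r a` of a distribution `D` over arms. -/
noncomputable def rewD {K : ℕ} (r : Fin K → ℝ) (D : Fin K → ℝ) : ℝ := ∑ a, D a * r a

/-- Expected per-round consumption `c_i(D) = ∑ a, D a · c i a` of resource `i` under a
distribution `D` over arms. -/
noncomputable def consD {K d : ℕ} (c : Fin d → Fin K → ℝ) (i : Fin d) (D : Fin K → ℝ) : ℝ :=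
  ∑ a, D a * c i a

/-- The Lagrange function `L(D,λ) = r(D) + ∑ i, λ i · (1 − (T/B)·c_i(D))` of the
Bandits-with-Knapsacks linear program. -/
noncomputable def Lagr {K d : ℕ} (T B : ℝ) (r : Fin K → ℝ) (c : Fin d → Fin K → ℝ)
    (D : Fin K → ℝ) (l : Fin d → ℝ) : ℝ :=
  rewD r D + ∑ i, l i * (1 - (T / B) * consD c i D)

/-- The LP value `OPT_LP = max { r(D) : D ∈ Δ_K, c_i(D) ≤ B/T ∀i }` (the maximum is
attained, so `sSup` computes it). -/
noncomputable def optLP {K d : ℕ} (T B : ℝ) (r : Fin K → ℝ) (c : Fin d → Fin K → ℝ) : ℝ :=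
  sSup (rewD r '' {D ∈ stdSimplex ℝ (Fin K) | ∀ i, consD c i D ≤ B / T})

/-- **Nash equilibria of the Lagrangian game characterize the LP optimum for BwK.**
Assume a time resource `i₀` (with `c i₀ a = B/T` for all arms) and a null arm `a₀`
(zero reward, zero consumption of every resource except the time resource). If
`(D*, λ*)` is a Nash equilibrium of the Lagrangian zero-sum game, then:
(a) `1 − (T/B)·c_i(D*) ≥ 0` for every resource `i`, with equality whenever `λ*_i > 0`;
(b) `D*` is an optimal solution of the LP; and (c) `L(D*, λ*) = OPT_LP`. -/
theorem lagrangian_game_characterizes_LP {K d : ℕ} (hK : 1 ≤ K) (hd : 1 ≤ d)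
    (B T : ℝ) (hB : 0 < B) (hBT : B ≤ T)
    (r : Fin K → ℝ) (hr : ∀ a, r a ∈ Set.Icc (0 : ℝ) 1)
    (c : Fin d → Fin K → ℝ) (hc : ∀ i a, c i a ∈ Set.Icc (0 : ℝ) 1)
    (i₀ : Fin d) (hi₀ : ∀ a, c i₀ a = B / T)
    (a₀ : Fin K) (ha₀r : r a₀ = 0) (ha₀c : ∀ i, i ≠ i₀ → c i a₀ = 0)
    (Dstar : Fin K → ℝ) (lstar : Fin d → ℝ)
    (hD : Dstar ∈ stdSimplex ℝ (Fin K)) (hl : lstar ∈ stdSimplex ℝ (Fin d))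
    (hNash : ∀ D ∈ stdSimplex ℝ (Fin K), ∀ l ∈ stdSimplex ℝ (Fin d),
      Lagr T B r c D lstar ≤ Lagr T B r c Dstar lstar ∧
        Lagr T B r c Dstar lstar ≤ Lagr T B r c Dstar l) :
    (∀ i, 0 ≤ 1 - (T / B) * consD c i Dstar ∧
        (0 < lstar i → 1 - (T / B) * consD c i Dstar = 0)) ∧
    ((∀ i, consD c i Dstar ≤ B / T) ∧ rewD r Dstar = optLP T B r c) ∧
    Lagr T B r c Dstar lstar = optLP T B r c := by
  classical
  have hT : 0 < T := lt_of_lt_of_le hB hBT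
  have hBne : B ≠ 0 := ne_of_gt hB
  have hTne : T ≠ 0 := ne_of_gt hT
  have hTB : T / B * (B / T) = 1 := by field_simp
  -- notation
  have hsum_delta : ∀ {n : ℕ} (j : Fin n) (f : Fin n → ℝ),
      (∑ i, (if i = j then (1:ℝ) else 0) * f i) = f j := by
    intro n j f; simp
  have hdeltaK : ∀ j : Fin K, (fun a => if a = j then (1:ℝ) else 0) ∈ stdSimplex ℝ (Fin K) := by
    intro j
    refine ⟨fun a => ?_, by simp⟩
    by_cases h : a = j <;> simp [h]
  have hdeltad : ∀ j : Fin d, (fun i => if i = j then (1:ℝ) else 0) ∈ stdSimplex ℝ (Fin d) := by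
    intro j
    refine ⟨fun a => ?_, by simp⟩
    by_cases h : a = j <;> simp [h]
  set g : Fin d → ℝ := fun i => 1 - T / B * consD c i Dstar with hg
  set S : ℝ := ∑ i, lstar i * g i with hSdef
  have hLag : Lagr T B r c Dstar lstar = rewD r Dstar + S := rfl
  -- the time resource has tight consumption
  have hcons0 : consD c i₀ Dstar = B / T := by
    simp only [consD]
    rw [Finset.sum_congr rfl (fun a _ => by rw [hi₀ a]), ← Finset.sum_mul, hD.2, one_mul]
  have hgi₀ : g i₀ = 0 := by
    simp only [hg, hcons0, hTB, sub_self]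
  -- dual optimality: S ≤ g j for all j
  have hSle : ∀ j : Fin d, S ≤ g j := by
    intro j
    have h := (hNash Dstar hD _ (hdeltad j)).2
    simp only [Lagr] at h
    have hsum : (∑ i, (if i = j then (1:ℝ) else 0) * (1 - T / B * consD c i Dstar)) = g j :=
      hsum_delta j _
    rw [hsum] at h
    have hS' : (∑ i, lstar i * (1 - T / B * consD c i Dstar)) = S := rfl
    rw [hS'] at h
    linarith
  -- rewards of distributions are at most 1
  have hrew_le : ∀ D ∈ stdSimplex ℝ (Fin K), rewD r D ≤ 1 := by
    intro D hDm
    calc rewD r D = ∑ a, D a * r a := rfl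
    _ ≤ ∑ a, D a * 1 := Finset.sum_le_sum (fun a _ =>
        mul_le_mul_of_nonneg_left (hr a).2 (hDm.1 a))
    _ = 1 := by simp [hDm.2]
  -- value of the Lagrangian at the null arm
  have hLa₀ : Lagr T B r c (fun a => if a = a₀ then (1:ℝ) else 0) lstar = 1 - lstar i₀ := by
    simp only [Lagr, rewD, consD]
    have h1 : (∑ a, (if a = a₀ then (1:ℝ) else 0) * r a) = 0 := by
      rw [hsum_delta a₀ r, ha₀r]
    have h2 : ∀ i, (∑ a, (if a = a₀ then (1:ℝ) else 0) * c i a) = c i a₀ := fun i =>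
      hsum_delta a₀ (c i)
    rw [h1]
    have h3 : ∀ i, lstar i * (1 - T / B * (∑ a, (if a = a₀ then (1:ℝ) else 0) * c i a))
        = lstar i - (if i = i₀ then lstar i else 0) := by
      intro i
      rw [h2 i]
      by_cases hi : i = i₀
      · subst hi; rw [hi₀ a₀, hTB]; simp
      · rw [ha₀c i hi]; simp [hi]
    rw [Finset.sum_congr rfl (fun i _ => h3 i), Finset.sum_sub_distrib, hl.2]
    simp
  -- (a) nonnegativity of slacks
  have hgnn : ∀ j, 0 ≤ g j := by
    intro j
    by_contra hneg
    push_neg at hneg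
    have hji : j ≠ i₀ := by
      intro h; rw [h, hgi₀] at hneg; exact absurd hneg (lt_irrefl 0)
    -- move the mass of lstar i₀ to resource j
    set l' : Fin d → ℝ := fun i =>
      lstar i + lstar i₀ * ((if i = j then 1 else 0) - (if i = i₀ then 1 else 0)) with hl'
    have hl'mem : l' ∈ stdSimplex ℝ (Fin d) := by
      refine ⟨fun i => ?_, ?_⟩
      · by_cases hij : i = j
        · subst hij
          have : l' i = lstar i + lstar i₀ := by simp [hl', hji]
          rw [this]
          exact add_nonneg (hl.1 i) (hl.1 i₀)
        · by_cases hii : i = i₀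
          · have : l' i = 0 := by
              simp only [hl']
              rw [hii]
              simp [Ne.symm hji]
            rw [this]
          · have : l' i = lstar i := by simp [hl', hij, hii]
            rw [this]; exact hl.1 i
      · have : (∑ i, l' i) = 1 := by
          simp only [hl']
          rw [Finset.sum_add_distrib, hl.2, ← Finset.mul_sum, Finset.sum_sub_distrib]
          simp
        rw [this]
    have h := (hNash Dstar hD l' hl'mem).2
    simp only [Lagr] at h
    have hsum : (∑ i, l' i * (1 - T / B * consD c i Dstar)) = S + lstar i₀ * g j := by
      have hterm : ∀ i, l' i * (1 - T / B * consD c i Dstar)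
          = lstar i * g i + lstar i₀ *
            ((if i = j then (1:ℝ) else 0) * g i - (if i = i₀ then (1:ℝ) else 0) * g i) := by
        intro i
        simp only [hl', hg]
        ring
      rw [Finset.sum_congr rfl (fun i _ => hterm i), Finset.sum_add_distrib, ← Finset.mul_sum,
        Finset.sum_sub_distrib, hsum_delta j g, hsum_delta i₀ g, hgi₀]
      rw [hSdef]
      ring
    rw [hsum] at h
    have hS' : (∑ i, lstar i * (1 - T / B * consD c i Dstar)) = S := rfl
    rw [hS'] at h
    have h0 : 0 ≤ lstar i₀ * g j := by linarith
    have hli₀ : lstar i₀ = 0 := by nlinarith [hl.1 i₀]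
    -- primal deviation to the null arm
    have h2 := (hNash _ (hdeltaK a₀) lstar hl).1
    rw [hLa₀, hLag, hli₀] at h2
    have h3 := hrew_le Dstar hD
    have h4 := hSle j
    linarith
  -- S = 0
  have hS0 : S = 0 := by
    have h1 : S ≤ 0 := by
      have := hSle i₀
      rw [hgi₀] at this
      exact this
    have h2 : 0 ≤ S := Finset.sum_nonneg fun i _ => mul_nonneg (hl.1 i) (hgnn i)
    linarith
  -- complementary slackness
  have hcomp : ∀ i, 0 < lstar i → g i = 0 := by
    intro i hi
    have hterm : lstar i * g i = 0 :=
      (Finset.sum_eq_zero_iff_of_nonneg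
        (fun i _ => mul_nonneg (hl.1 i) (hgnn i))).mp hS0 i (Finset.mem_univ i)
    rcases mul_eq_zero.mp hterm with h | h
    · exact absurd h (ne_of_gt hi)
    · exact h
  -- feasibility
  have hfeas : ∀ i, consD c i Dstar ≤ B / T := by
    intro i
    have h := hgnn i
    simp only [hg] at h
    have h2 : T / B * consD c i Dstar ≤ 1 := by linarith
    rw [div_mul_eq_mul_div, div_le_one hB] at h2
    rw [le_div_iff₀ hT]
    linarith
  -- D* dominates all feasible distributions
  have hbound : ∀ D ∈ stdSimplex ℝ (Fin K), (∀ i, consD c i D ≤ B / T) →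
      rewD r D ≤ rewD r Dstar := by
    intro D hDm hfD
    have h := (hNash D hDm lstar hl).1
    simp only [Lagr] at h
    have hnn : 0 ≤ ∑ i, lstar i * (1 - T / B * consD c i D) := by
      refine Finset.sum_nonneg fun i _ => mul_nonneg (hl.1 i) ?_
      have h2 : T / B * consD c i D ≤ T / B * (B / T) :=
        mul_le_mul_of_nonneg_left (hfD i) (by positivity)
      rw [hTB] at h2
      linarith
    have hS' : (∑ i, lstar i * (1 - T / B * consD c i Dstar)) = S := rfl
    rw [hS', hS0] at h
    linarith
  -- OPT_LP equals r(D*)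
  have hopt : rewD r Dstar = optLP T B r c := by
    have hmem : rewD r Dstar ∈
        rewD r '' {D ∈ stdSimplex ℝ (Fin K) | ∀ i, consD c i D ≤ B / T} :=
      ⟨Dstar, ⟨hD, hfeas⟩, rfl⟩
    have hub : ∀ x ∈ rewD r '' {D ∈ stdSimplex ℝ (Fin K) | ∀ i, consD c i D ≤ B / T},
        x ≤ rewD r Dstar := by
      rintro x ⟨D, ⟨hDm, hfD⟩, rfl⟩
      exact hbound D hDm hfD
    exact le_antisymm (le_csSup ⟨rewD r Dstar, hub⟩ hmem) (csSup_le ⟨_, hmem⟩ hub)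
  refine ⟨fun i => ⟨hgnn i, fun hi => hcomp i hi⟩, ⟨hfeas, hopt⟩, ?_⟩
  rw [hLag, hS0, add_zero, hopt]
end
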